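/- For a = b = 1, the function S(ρ,x) = sin(ρx)/ρ + (1/ρ)·(x²/(1+x))·j₁(ρx) solves -y'' + q(x) y = ρ² y on (0,π) with q(x) = 2/(1+x)², S(ρ,0) = 0, S'(ρ,0) = 1, where j₁(z) = sin(z)/z² - cos(z)/z is the spherical Bessel function of order 1. -/

import Mathlib

/-!
Write `w x = (1 + x)⁻¹`, so that `w² + w' = 0` and `w² - w' = 2 / (1 + x)² = q`. With
`A = d/dx + w` and `B = -d/dx + w` one has `A B = -d²/dx² + w² + w'` and
`B A = -d²/dx² + w² - w'`, so the Darboux transform `B` maps solutions of `-u'' = ρ² u` to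
solutions of `-y'' + q y = ρ² y`. The function `S` is `B u` for
`u x = (sin (ρ x) + ρ cos (ρ x)) / ρ³`.
-/

open Real Set Filter Topology

section Darboux

variable {𝕜 : Type*} [NontriviallyNormedField 𝕜] {𝔸 : Type*} [NormedCommRing 𝔸]
  [NormedAlgebra 𝕜 𝔸] {w u v : 𝕜 → 𝔸} {dw μ : 𝔸} {x : 𝕜}

theorem hasDerivAt_darboux (hw : HasDerivAt w dw x) (hu : HasDerivAt u (v x) x)
    (hv : HasDerivAt v ((w x ^ 2 + dw - μ) * u x) x) :
    HasDerivAt (fun t => -v t + w t * u t) ((μ - w x ^ 2) * u x + w x * v x) x :=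
  (hv.neg.add (hw.mul hu)).congr_deriv (by ring)

theorem hasDerivAt_darboux_deriv (hw : HasDerivAt w dw x) (hu : HasDerivAt u (v x) x)
    (hv : HasDerivAt v ((w x ^ 2 + dw - μ) * u x) x) :
    HasDerivAt (fun t => (μ - w t ^ 2) * u t + w t * v t)
      ((w x ^ 2 - dw - μ) * (-v x + w x * u x)) x :=
  ((((hw.pow 2).const_sub μ).mul hu).add (hw.mul hv)).congr_deriv (by simp; ring)

end Darboux

theorem deriv_deriv_eq_of_hasDerivAt {𝕜 : Type*} [NontriviallyNormedField 𝕜] {F : Type*}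
    [NormedAddCommGroup F] [NormedSpace 𝕜 F] {f g g' : 𝕜 → F} {x : 𝕜} {a : F}
    (hfg : f =ᶠ[𝓝 x] g) (hg : ∀ᶠ t in 𝓝 x, HasDerivAt g (g' t) t) (hg' : HasDerivAt g' a x) :
    deriv (deriv f) x = a := by
  have hf' : deriv f =ᶠ[𝓝 x] g' := hfg.deriv.trans (hg.mono fun t ht => ht.deriv)
  rw [hf'.deriv_eq, hg'.deriv]

section Trigonometric

noncomputable def trigComb (ρ a b z : ℂ) : ℂ := a * Complex.sin (ρ * z) + b * Complex.cos (ρ * z)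

theorem hasDerivAt_trigComb (ρ a b z : ℂ) :
    HasDerivAt (trigComb ρ a b) (trigComb ρ (-(ρ * b)) (ρ * a) z) z := by
  have hρz : HasDerivAt (fun z => ρ * z) ρ z := by simpa using (hasDerivAt_id z).const_mul ρ
  exact ((hρz.csin.const_mul a).add (hρz.ccos.const_mul b)).congr_deriv
    (by unfold trigComb; ring)

theorem hasDerivAt_inv_one_add {z : ℂ} (hz : 1 + z ≠ 0) :
    HasDerivAt (fun z => (1 + z)⁻¹) (-(1 + z)⁻¹ ^ 2) z :=
  (((hasDerivAt_id z).const_add 1).inv hz).congr_deriv (by simp [div_eq_mul_inv])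

variable (ρ a b : ℂ)

noncomputable def darbouxTrig (z : ℂ) : ℂ :=
  -trigComb ρ (-(ρ * b)) (ρ * a) z + (1 + z)⁻¹ * trigComb ρ a b z

noncomputable def darbouxTrigDeriv (z : ℂ) : ℂ :=
  (ρ ^ 2 - (1 + z)⁻¹ ^ 2) * trigComb ρ a b z + (1 + z)⁻¹ * trigComb ρ (-(ρ * b)) (ρ * a) z

variable {ρ a b} {z : ℂ}

theorem hasDerivAt_darbouxTrig_and_deriv (hz : 1 + z ≠ 0) :
    HasDerivAt (darbouxTrig ρ a b) (darbouxTrigDeriv ρ a b z) z ∧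
      HasDerivAt (darbouxTrigDeriv ρ a b)
        ((2 * (1 + z)⁻¹ ^ 2 - ρ ^ 2) * darbouxTrig ρ a b z) z := by
  have hw := hasDerivAt_inv_one_add hz
  have hu := hasDerivAt_trigComb ρ a b z
  have hv : HasDerivAt (trigComb ρ (-(ρ * b)) (ρ * a))
      (((1 + z)⁻¹ ^ 2 + -(1 + z)⁻¹ ^ 2 - ρ ^ 2) * trigComb ρ a b z) z :=
    (hasDerivAt_trigComb ρ _ _ z).congr_deriv (by unfold trigComb; ring)
  exact ⟨hasDerivAt_darboux hw hu hv, (hasDerivAt_darboux_deriv hw hu hv).congr_deriv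
    (by unfold darbouxTrig; ring)⟩

theorem sin_add_spherical_eq_darbouxTrig (hρ : ρ ≠ 0) (hz : 1 + z ≠ 0) :
    Complex.sin (ρ * z) / ρ + (1 / ρ) * (z ^ 2 / (1 + z)) *
        (Complex.sin (ρ * z) / (ρ * z) ^ 2 - Complex.cos (ρ * z) / (ρ * z)) =
      darbouxTrig ρ (ρ⁻¹ ^ 3) (ρ⁻¹ ^ 2) z := by
  unfold darbouxTrig trigComb
  rcases eq_or_ne z 0 with rfl | hz0
  · simp
    field_simp
    ring
  · field_simp
    ring

end Trigonometric

/-- For `a = b = 1`, the function `S(ρ,x) = sin(ρx)/ρ + (1/ρ)(x²/(1+x)) j₁(ρx)`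
solves `-y'' + q y = ρ² y` with `q(x) = 2/(1+x)²`, `S(ρ,0) = 0`, `S'(ρ,0) = 1`. -/
theorem stmt_10 (ρ : ℂ) (hρ : ρ ≠ 0)
    (j₁ : ℂ → ℂ)
    (hj₁ : ∀ z, j₁ z = Complex.sin z / z ^ 2 - Complex.cos z / z)
    (S : ℝ → ℂ)
    (hS : S = fun x : ℝ => Complex.sin (ρ * x) / ρ
      + (1 / ρ) * ((x : ℂ) ^ 2 / (1 + (x : ℂ))) * j₁ (ρ * x))
    (q : ℝ → ℝ) (hqdef : q = fun x => 2 / (1 + x) ^ 2) :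
    (∀ x ∈ Ioo (0:ℝ) π, -(deriv (deriv S) x) + (q x : ℂ) * S x = ρ ^ 2 * S x) ∧
    S 0 = 0 ∧ deriv S 0 = 1 := by
  set Y := darbouxTrig ρ (ρ⁻¹ ^ 3) (ρ⁻¹ ^ 2)
  have hne : ∀ t : ℝ, -1 < t → (1 : ℂ) + t ≠ 0 := fun t ht => by
    exact_mod_cast (show 1 + t ≠ 0 by linarith)
  have hSY : ∀ x : ℝ, -1 < x → S =ᶠ[𝓝 x] fun t : ℝ => Y t := fun x hx => by
    filter_upwards [Ioi_mem_nhds hx] with t ht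
    simpa only [hS, hj₁] using sin_add_spherical_eq_darbouxTrig hρ (hne t ht)
  have hY : ∀ x : ℝ, -1 < x →
      ∀ᶠ t : ℝ in 𝓝 x, HasDerivAt (fun t : ℝ => Y t) (darbouxTrigDeriv ρ _ _ t) t := fun x hx => by
    filter_upwards [Ioi_mem_nhds hx] with t ht
    exact (hasDerivAt_darbouxTrig_and_deriv (hne t ht)).1.comp_ofReal
  refine ⟨fun x hx => ?_, by simp [hS], ?_⟩
  · have hx1 : -1 < x := by linarith [hx.1]
    rw [deriv_deriv_eq_of_hasDerivAt (hSY x hx1) (hY x hx1)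
      (hasDerivAt_darbouxTrig_and_deriv (hne x hx1)).2.comp_ofReal, (hSY x hx1).eq_of_nhds,
      hqdef]
    push_cast
    rw [div_eq_mul_inv, ← inv_pow]
    ring
  · rw [(hSY 0 (by norm_num)).deriv_eq, (hY 0 (by norm_num)).self_of_nhds.deriv]
    simp [darbouxTrigDeriv, trigComb]
    field_simp
    ring
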